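/- arXiv:1407.1301 — 5 statements merged into one kernel-verified Lean document; each statement's English description precedes it below -/
import Mathlib

section
/- Let X be a nonempty set and let 𝒟 be an algebra of bounded real-valued functions on X that is stable under normal contractions and C¹_c(ℝ²)-stable. Let (ℰ,𝒟) be a nonnegative definite symmetric bilinear form that is sup-norm-closable and on which normal contractions operate. Then for every f ∈ 𝒟 the linear functional L_f is bounded with ‖L_f‖_{𝒟'} ≤ 2ℰ(f): for all f, h ∈ 𝒟 one has |2ℰ(f·h, f) − ℰ(f², h)| ≤ 2·‖h‖_sup·ℰ(f,f). -/
open Filter Topology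

/-- The supremum norm of a (bounded) real-valued function. -/
noncomputable def supNorm {X : Type*} (f : X → ℝ) : ℝ := ⨆ x, |f x|

/-- A normal contraction: `F 0 = 0` and `F` is 1-Lipschitz. -/
def NormalContraction (F : ℝ → ℝ) : Prop :=
  F 0 = 0 ∧ ∀ x y : ℝ, |F x - F y| ≤ |x - y|

/-- Sup-norm-closability of a bilinear form `(ℰ, 𝒟)`: every `ℰ`-Cauchy sequence in `𝒟`
that tends to zero uniformly has energies tending to zero. -/
def SupNormClosable {X : Type*} (𝒟 : Set (X → ℝ)) (ℰ : (X → ℝ) → (X → ℝ) → ℝ) : Prop :=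
  ∀ f : ℕ → X → ℝ, (∀ n, f n ∈ 𝒟) →
    (∀ ε : ℝ, 0 < ε → ∃ N, ∀ n ≥ N, ∀ m ≥ N, ℰ (f n - f m) (f n - f m) < ε) →
    Tendsto (fun n => supNorm (f n)) atTop (𝓝 0) →
    Tendsto (fun n => ℰ (f n) (f n)) atTop (𝓝 0)

/-!
With `c = ‖h‖_sup`, both inequalities say that `Φ(f) = 2cℰ(f) − L_f(±h)` is nonnegative, where
`Φ` is the quadratic form of `(u, v) ↦ 2cℰ(u, v) − L_{u,v}(h)`.

Cut a nonnegative `f` into horizontal layers `((f − kρ)⁺) ∧ ρ`. The cross term between the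
truncation `f ∧ kρ` and the layer above it is a sum of two energies `ℰ(p, F ∘ g)` in which a
normal contraction (`s ↦ s ∧ T`, resp. `s ↦ (s − γ)⁺`) undoes every small perturbation of
`F ∘ g` in the direction `p`; since contractions do not increase energy, `ℰ(p, F ∘ g) ≥ 0`.
So `Φ` is superadditive over the layers. On a single layer `|w| ≤ ρ`, the square rule
`ℰ(w²) ≤ 4ρ²ℰ(w)` (from the contraction `s ↦ (|s| ∧ ρ)² / 2ρ`) and the product rule it gives by
polarization yield `Φ(w) ≥ −3ρℰ(w) − (c + 2ρ)ℰ(h)`. After rescaling `f` to fill `n` layers of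
height `ρ`, the total error is `3ρℰ(f) + O(1/n)`; let `n → ∞`, then `ρ → 0`. A general `f` is
cut at level `0` in the same way.
-/

lemma abs_le_supNorm {X : Type*} {f : X → ℝ} (hf : ∃ C, ∀ x, |f x| ≤ C) (x : X) :
    |f x| ≤ supNorm f := by
  obtain ⟨C, hC⟩ := hf
  exact le_ciSup ⟨C, by rintro _ ⟨y, rfl⟩; exact hC y⟩ x

lemma supNorm_nonneg {X : Type*} (f : X → ℝ) : 0 ≤ supNorm f :=
  Real.iSup_nonneg fun x => abs_nonneg (f x)

lemma nonneg_of_forall_pos_nonneg_add_mul {a b : ℝ} (h : ∀ t > 0, 0 ≤ a + t * b) : 0 ≤ a := by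
  have hlim : Tendsto (fun t => a + t * b) (𝓝[>] 0) (𝓝 a) := by
    have : Continuous fun t : ℝ => a + t * b := by fun_prop
    simpa using (this.tendsto 0).mono_left nhdsWithin_le_nhds
  exact ge_of_tendsto hlim (eventually_nhdsWithin_of_forall h)

lemma min_add_max_sub_eq {X : Type*} (g : X → ℝ) (T : ℝ) :
    ((fun x => min (g x) T) + fun x => max (g x - T) 0) = g := by
  funext x
  rcases le_total (g x) T with hx | hx
  · simp [min_eq_left hx, max_eq_right (sub_nonpos.2 hx)]
  · simp [min_eq_right hx, max_eq_left (sub_nonneg.2 hx)]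

namespace NormalContraction

lemma min_const {T : ℝ} (hT : 0 ≤ T) : NormalContraction fun s => min s T :=
  ⟨min_eq_left hT, fun x y => by simpa using abs_min_sub_min_le_max x T y T⟩

lemma max_sub_const_zero {T : ℝ} (hT : 0 ≤ T) : NormalContraction fun s => max (s - T) 0 :=
  ⟨by simpa using hT, fun x y => by simpa using abs_max_sub_max_le_abs (x - T) (y - T) 0⟩

lemma sq_min_abs_div {K : ℝ} (hK : 0 < K) :
    NormalContraction fun s => min |s| K ^ 2 / (2 * K) := by
  refine ⟨by simp [hK.le], fun x y => ?_⟩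
  have ha : 0 ≤ min |x| K := le_min (abs_nonneg x) hK.le
  have hb : 0 ≤ min |y| K := le_min (abs_nonneg y) hK.le
  have hab : |min |x| K - min |y| K| ≤ |x - y| :=
    (show _ ≤ abs (|x| - |y|) by simpa using abs_min_sub_min_le_max |x| K |y| K).trans
      (abs_abs_sub_abs_le_abs_sub x y)
  have h2K : 0 < 2 * K := by positivity
  rw [← sub_div, abs_div, abs_of_pos h2K, div_le_iff₀ h2K, sq_sub_sq, abs_mul,
    abs_of_nonneg (add_nonneg ha hb)]
  calc (min |x| K + min |y| K) * |min |x| K - min |y| K|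
      ≤ (2 * K) * |x - y| := by
        gcongr
        linarith [min_le_right |x| K, min_le_right |y| K]
    _ = |x - y| * (2 * K) := mul_comm _ _

end NormalContraction

structure IsNonnegSymmForm {X : Type*} (𝒟 : Set (X → ℝ)) (ℰ : (X → ℝ) → (X → ℝ) → ℝ) :
    Prop where
  add_mem : ∀ f ∈ 𝒟, ∀ g ∈ 𝒟, f + g ∈ 𝒟
  smul_mem : ∀ c : ℝ, ∀ f ∈ 𝒟, c • f ∈ 𝒟
  symm : ∀ f ∈ 𝒟, ∀ g ∈ 𝒟, ℰ f g = ℰ g f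
  add_left : ∀ f ∈ 𝒟, ∀ g ∈ 𝒟, ∀ h ∈ 𝒟, ℰ (f + g) h = ℰ f h + ℰ g h
  smul_left : ∀ c : ℝ, ∀ f ∈ 𝒟, ∀ g ∈ 𝒟, ℰ (c • f) g = c * ℰ f g
  nonneg : ∀ f ∈ 𝒟, 0 ≤ ℰ f f

namespace IsNonnegSymmForm

variable {X : Type*} {𝒟 : Set (X → ℝ)} {ℰ : (X → ℝ) → (X → ℝ) → ℝ} {u v w : X → ℝ}

lemma add_right (H : IsNonnegSymmForm 𝒟 ℰ) (hu : u ∈ 𝒟) (hv : v ∈ 𝒟) (hw : w ∈ 𝒟) :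
    ℰ u (v + w) = ℰ u v + ℰ u w := by
  rw [H.symm u hu _ (H.add_mem v hv w hw), H.add_left v hv w hw u hu, H.symm v hv u hu,
    H.symm w hw u hu]

lemma smul_right (H : IsNonnegSymmForm 𝒟 ℰ) (c : ℝ) (hu : u ∈ 𝒟) (hv : v ∈ 𝒟) :
    ℰ u (c • v) = c * ℰ u v := by
  rw [H.symm u hu _ (H.smul_mem c v hv), H.smul_left c v hv u hu, H.symm v hv u hu]

lemma sub_mem (H : IsNonnegSymmForm 𝒟 ℰ) (hu : u ∈ 𝒟) (hv : v ∈ 𝒟) : u - v ∈ 𝒟 := by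
  simpa [sub_eq_add_neg] using H.add_mem u hu _ (H.smul_mem (-1) v hv)

lemma sub_left (H : IsNonnegSymmForm 𝒟 ℰ) (hu : u ∈ 𝒟) (hv : v ∈ 𝒟) (hw : w ∈ 𝒟) :
    ℰ (u - v) w = ℰ u w - ℰ v w := by
  rw [sub_eq_add_neg, ← neg_one_smul ℝ v, H.add_left u hu _ (H.smul_mem _ v hv) w hw,
    H.smul_left _ v hv w hw]
  ring

lemma energy_add (H : IsNonnegSymmForm 𝒟 ℰ) (hu : u ∈ 𝒟) (hv : v ∈ 𝒟) :
    ℰ (u + v) (u + v) = ℰ u u + 2 * ℰ u v + ℰ v v := by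
  rw [H.add_left u hu v hv _ (H.add_mem u hu v hv), H.add_right hu hu hv, H.add_right hv hu hv,
    H.symm v hv u hu]
  ring

lemma energy_smul (H : IsNonnegSymmForm 𝒟 ℰ) (c : ℝ) (hu : u ∈ 𝒟) :
    ℰ (c • u) (c • u) = c ^ 2 * ℰ u u := by
  rw [H.smul_left c u hu _ (H.smul_mem c u hu), H.smul_right c hu hu]
  ring

lemma two_mul_le (H : IsNonnegSymmForm 𝒟 ℰ) (hu : u ∈ 𝒟) (hv : v ∈ 𝒟) {ρ : ℝ} (hρ : 0 < ρ) :
    2 * ℰ u v ≤ ρ⁻¹ * ℰ u u + ρ * ℰ v v := by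
  have h := H.nonneg _ (H.add_mem u hu _ (H.smul_mem (-ρ) v hv))
  rw [H.energy_add hu (H.smul_mem _ v hv), H.smul_right _ hu hv, H.energy_smul _ hv] at h
  rw [← sub_nonneg]
  have : ρ⁻¹ * ℰ u u + ρ * ℰ v v - 2 * ℰ u v =
      ρ⁻¹ * (ℰ u u + 2 * (-ρ * ℰ u v) + (-ρ) ^ 2 * ℰ v v) := by
    field_simp
    ring
  rw [this]
  positivity

lemma neg_two_mul_le (H : IsNonnegSymmForm 𝒟 ℰ) (hu : u ∈ 𝒟) (hv : v ∈ 𝒟) {ρ : ℝ}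
    (hρ : 0 < ρ) : -(2 * ℰ u v) ≤ ρ⁻¹ * ℰ u u + ρ * ℰ v v := by
  have h := H.two_mul_le (H.smul_mem (-1) u hu) hv hρ
  rwa [H.smul_left _ u hu v hv, H.energy_smul _ hu, neg_one_sq, one_mul, neg_one_mul,
    mul_neg] at h

lemma energy_add_le (H : IsNonnegSymmForm 𝒟 ℰ) (hu : u ∈ 𝒟) (hv : v ∈ 𝒟) :
    ℰ (u + v) (u + v) ≤ 2 * ℰ u u + 2 * ℰ v v := by
  have h := H.two_mul_le hu hv one_pos
  rw [H.energy_add hu hv]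
  linarith

lemma nonneg_apply_of_forall_le_energy_add_smul (H : IsNonnegSymmForm 𝒟 ℰ) (hv : v ∈ 𝒟)
    (hu : u ∈ 𝒟) (h : ∀ t : ℝ, 0 < t → ℰ v v ≤ ℰ (v + t • u) (v + t • u)) : 0 ≤ ℰ u v := by
  suffices 0 ≤ 2 * ℰ u v by linarith
  refine nonneg_of_forall_pos_nonneg_add_mul (b := ℰ u u) fun t ht => ?_
  have h' := h t ht
  rw [H.energy_add hv (H.smul_mem t u hu), H.smul_right t hv hu, H.energy_smul t hu,
    H.symm v hv u hu] at h'
  nlinarith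

end IsNonnegSymmForm

structure IsMarkovianForm {X : Type*} (𝒟 : Set (X → ℝ)) (ℰ : (X → ℝ) → (X → ℝ) → ℝ) : Prop
    extends IsNonnegSymmForm 𝒟 ℰ where
  mul_mem : ∀ f ∈ 𝒟, ∀ g ∈ 𝒟, f * g ∈ 𝒟
  comp_mem : ∀ F : ℝ → ℝ, NormalContraction F → ∀ f ∈ 𝒟, F ∘ f ∈ 𝒟
  energy_comp_le : ∀ F : ℝ → ℝ, NormalContraction F → ∀ f ∈ 𝒟, ℰ (F ∘ f) (F ∘ f) ≤ ℰ f f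

/-- The polarization of the paper's `L_f(h) = 2ℰ(f·h, f) − ℰ(f², h)`:
`energyPairing ℰ f f h = L_f(h)`. -/
def energyPairing {X : Type*} (ℰ : (X → ℝ) → (X → ℝ) → ℝ) (u v h : X → ℝ) : ℝ :=
  ℰ (u * h) v + ℰ (v * h) u - ℰ (u * v) h

namespace IsMarkovianForm

variable {X : Type*} {𝒟 : Set (X → ℝ)} {ℰ : (X → ℝ) → (X → ℝ) → ℝ} {f g h p u v : X → ℝ}
  {c M T : ℝ}

lemma nonneg_apply_of_forall_comp_eq (H : IsMarkovianForm 𝒟 ℰ) (hv : v ∈ 𝒟) (hp : p ∈ 𝒟)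
    (h : ∀ t : ℝ, 0 < t → ∃ F, NormalContraction F ∧ F ∘ (v + t • p) = v) : 0 ≤ ℰ p v :=
  H.nonneg_apply_of_forall_le_energy_add_smul hv hp fun t ht => by
    obtain ⟨F, hF, hFv⟩ := h t ht
    calc ℰ v v = ℰ (F ∘ (v + t • p)) (F ∘ (v + t • p)) := by rw [hFv]
      _ ≤ _ := H.energy_comp_le F hF _ (H.add_mem v hv _ (H.smul_mem t p hp))

lemma nonneg_apply_min (H : IsMarkovianForm 𝒟 ℰ) (hg : g ∈ 𝒟) (hT : 0 ≤ T) (hp : p ∈ 𝒟)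
    (hp0 : ∀ x, 0 ≤ p x) (hpT : ∀ x, g x ≤ T → p x = 0) :
    0 ≤ ℰ p (fun x => min (g x) T) := by
  refine H.nonneg_apply_of_forall_comp_eq (H.comp_mem _ (.min_const hT) g hg) hp
    fun t ht => ⟨_, .min_const hT, funext fun x => ?_⟩
  simp only [Function.comp_apply, Pi.add_apply, Pi.smul_apply, smul_eq_mul]
  rcases le_or_gt (g x) T with hx | hx
  · simp [hpT x hx]
  · rw [min_eq_right hx.le, min_eq_right (by nlinarith [hp0 x])]

lemma nonneg_apply_max_sub (H : IsMarkovianForm 𝒟 ℰ) (hg : g ∈ 𝒟) (hT : 0 ≤ T) (hp : p ∈ 𝒟)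
    {γ : ℝ} (hγ : 0 ≤ γ) (hpγ : ∀ x, p x ≤ γ) (hpT : ∀ x, T < g x → p x = γ) :
    0 ≤ ℰ p (fun x => max (g x - T) 0) := by
  refine H.nonneg_apply_of_forall_comp_eq (H.comp_mem _ (.max_sub_const_zero hT) g hg) hp
    fun t ht => ⟨_, .max_sub_const_zero (mul_nonneg ht.le hγ), funext fun x => ?_⟩
  simp only [Function.comp_apply, Pi.add_apply, Pi.smul_apply, smul_eq_mul]
  rcases le_or_gt (g x) T with hx | hx
  · rw [max_eq_right (sub_nonpos.2 hx), zero_add, max_eq_right]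
    nlinarith [hpγ x]
  · rw [hpT x hx, add_sub_cancel_right]
    exact max_eq_left (le_max_right _ _)

lemma energy_mul_self_le (H : IsMarkovianForm 𝒟 ℰ) (hu : u ∈ 𝒟) {K : ℝ} (hK : 0 < K)
    (huK : ∀ x, |u x| ≤ K) : ℰ (u * u) (u * u) ≤ 4 * K ^ 2 * ℰ u u := by
  have hF := NormalContraction.sq_min_abs_div hK
  have hu2 : u * u = (2 * K) • ((fun s => min |s| K ^ 2 / (2 * K)) ∘ u) := by
    funext x
    simp only [Pi.mul_apply, Pi.smul_apply, Function.comp_apply, smul_eq_mul,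
      min_eq_left (huK x), sq_abs]
    field_simp
  rw [hu2, H.energy_smul _ (H.comp_mem _ hF u hu)]
  calc (2 * K) ^ 2 * ℰ _ _ ≤ (2 * K) ^ 2 * ℰ u u := by gcongr; exact H.energy_comp_le _ hF u hu
    _ = 4 * K ^ 2 * ℰ u u := by ring

lemma energy_mul_le (H : IsMarkovianForm 𝒟 ℰ) (hu : u ∈ 𝒟) (hv : v ∈ 𝒟) {a b : ℝ}
    (hab : 0 < a + b) (hua : ∀ x, |u x| ≤ a) (hvb : ∀ x, |v x| ≤ b) :
    ℰ (u * v) (u * v) ≤ (a + b) ^ 2 * (ℰ u u + ℰ v v) := by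
  set w := (-1 : ℝ) • v
  have hw : w ∈ 𝒟 := H.smul_mem _ v hv
  set P := u + v
  set Q := u + w
  have hPmem : P ∈ 𝒟 := H.add_mem u hu v hv
  have hQmem : Q ∈ 𝒟 := H.add_mem u hu w hw
  have hPP := H.mul_mem P hPmem P hPmem
  have hQQ := H.mul_mem Q hQmem Q hQmem
  have hP : ∀ x, |P x| ≤ a + b := fun x => (abs_add_le _ _).trans (add_le_add (hua x) (hvb x))
  have hQ : ∀ x, |Q x| ≤ a + b := fun x => by
    simpa [Q, w, ← sub_eq_add_neg] using (abs_sub _ _).trans (add_le_add (hua x) (hvb x))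
  have hpolar : (4 : ℝ) • (u * v) = P * P + (-1 : ℝ) • (Q * Q) := by
    funext x
    simp only [P, Q, w, Pi.smul_apply, Pi.mul_apply, Pi.add_apply, smul_eq_mul]
    ring
  have hpar : ℰ P P + ℰ Q Q = 2 * ℰ u u + 2 * ℰ v v := by
    rw [H.energy_add hu hv, H.energy_add hu hw, H.smul_right _ hu hv, H.energy_smul _ hv]
    ring
  have h16 : 16 * ℰ (u * v) (u * v) ≤ 2 * ℰ (P * P) (P * P) + 2 * ℰ (Q * Q) (Q * Q) := by
    have h := H.energy_add_le hPP (H.smul_mem (-1) _ hQQ)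
    rw [← hpolar, H.energy_smul _ (H.mul_mem u hu v hv), H.energy_smul _ hQQ] at h
    linarith
  have hP2 := H.energy_mul_self_le hPmem hab hP
  have hQ2 := H.energy_mul_self_le hQmem hab hQ
  nlinarith

lemma energyPairing_add_self (H : IsMarkovianForm 𝒟 ℰ) (hh : h ∈ 𝒟) (hu : u ∈ 𝒟) (hv : v ∈ 𝒟) :
    energyPairing ℰ (u + v) (u + v) h =
      energyPairing ℰ u u h + 2 * energyPairing ℰ u v h + energyPairing ℰ v v h := by
  have huh := H.mul_mem u hu h hh
  have hvh := H.mul_mem v hv h hh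
  have huu := H.mul_mem u hu u hu
  have huv := H.mul_mem u hu v hv
  have hvv := H.mul_mem v hv v hv
  have e1 : (u + v) * h = u * h + v * h := add_mul u v h
  have e2 : (u + v) * (u + v) = u * u + v * v + (u * v + u * v) := by ring
  simp only [energyPairing]
  rw [e1, e2, H.add_left _ huh _ hvh _ (H.add_mem u hu v hv), H.add_right huh hu hv,
    H.add_right hvh hu hv, H.add_left _ (H.add_mem _ huu _ hvv) _ (H.add_mem _ huv _ huv) h hh,
    H.add_left _ huu _ hvv h hh, H.add_left _ huv _ huv h hh]
  ring

lemma energyPairing_smul_self (H : IsMarkovianForm 𝒟 ℰ) (a : ℝ) (hh : h ∈ 𝒟) (hu : u ∈ 𝒟) :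
    energyPairing ℰ (a • u) (a • u) h = a ^ 2 * energyPairing ℰ u u h := by
  have huh := H.mul_mem u hu h hh
  have huu := H.mul_mem u hu u hu
  simp only [energyPairing, smul_mul_assoc, mul_smul_comm, smul_smul]
  rw [H.smul_left _ _ huh _ (H.smul_mem a u hu), H.smul_right _ huh hu,
    H.smul_left _ _ huu _ hh]
  ring

lemma energyPairing_self_smul (H : IsMarkovianForm 𝒟 ℰ) (a : ℝ) (hh : h ∈ 𝒟) (hf : f ∈ 𝒟) :
    energyPairing ℰ f f (a • h) = a * energyPairing ℰ f f h := by
  simp only [energyPairing, mul_smul_comm]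
  rw [H.smul_left _ _ (H.mul_mem f hf h hh) _ hf, H.smul_right _ (H.mul_mem f hf f hf) hh]
  ring

lemma energyPairing_min_max_le (H : IsMarkovianForm 𝒟 ℰ) (hh : h ∈ 𝒟) (hc0 : 0 ≤ c)
    (hhc : ∀ x, h x ≤ c) (hg : g ∈ 𝒟) (hT : 0 ≤ T) :
    energyPairing ℰ (fun x => min (g x) T) (fun x => max (g x - T) 0) h ≤
      2 * c * ℰ (fun x => min (g x) T) (fun x => max (g x - T) 0) := by
  set u : X → ℝ := fun x => min (g x) T
  set v : X → ℝ := fun x => max (g x - T) 0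
  have hu : u ∈ 𝒟 := H.comp_mem _ (.min_const hT) g hg
  have hv : v ∈ 𝒟 := H.comp_mem _ (.max_sub_const_zero hT) g hg
  have hv_zero : ∀ x, g x ≤ T → v x = 0 := fun x hx => max_eq_right (sub_nonpos.2 hx)
  have hu_eq : ∀ x, T < g x → u x = T := fun x hx => min_eq_right hx.le
  have huv : u * v = T • v := funext fun x => by
    rcases le_or_gt (g x) T with hx | hx
    · simp [hv_zero x hx]
    · simp [hu_eq x hx]
  -- since `u v = T v`, the cross term is `ℰ(c v − v h, u) + ℰ(c u − u h + T h, v)`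
  have hA : 0 ≤ ℰ (c • v - v * h) u := by
    refine H.nonneg_apply_min hg hT (H.sub_mem (H.smul_mem c v hv) (H.mul_mem v hv h hh))
      (fun x => ?_) fun x hx => by simp [hv_zero x hx]
    have : 0 ≤ v x := le_max_right _ _
    simpa [mul_comm (v x), ← sub_mul] using mul_nonneg (sub_nonneg.2 (hhc x)) this
  have hB : 0 ≤ ℰ (c • u - u * h + T • h) v := by
    refine H.nonneg_apply_max_sub hg hT (H.add_mem _ (H.sub_mem (H.smul_mem c u hu)
      (H.mul_mem u hu h hh)) _ (H.smul_mem T h hh)) (mul_nonneg hc0 hT) (fun x => ?_)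
      fun x hx => by simp [hu_eq x hx]
    have : u x ≤ T := min_le_right _ _
    simp only [Pi.add_apply, Pi.sub_apply, Pi.smul_apply, Pi.mul_apply, smul_eq_mul]
    nlinarith [hhc x]
  rw [H.sub_left (H.smul_mem c v hv) (H.mul_mem v hv h hh) hu, H.smul_left c v hv u hu,
    H.symm v hv u hu] at hA
  rw [H.add_left _ (H.sub_mem (H.smul_mem c u hu) (H.mul_mem u hu h hh)) _ (H.smul_mem T h hh)
    v hv, H.sub_left (H.smul_mem c u hu) (H.mul_mem u hu h hh) hv, H.smul_left c u hu v hv,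
    H.smul_left T h hh v hv] at hB
  rw [energyPairing, huv, H.smul_left T v hv h hh, H.symm v hv h hh]
  linarith

lemma energyPairing_self_le_of_abs_le (H : IsMarkovianForm 𝒟 ℰ) (hh : h ∈ 𝒟) (hc0 : 0 ≤ c)
    (hc : ∀ x, |h x| ≤ c) (hu : u ∈ 𝒟) {ρ : ℝ} (hρ : 0 < ρ) (huρ : ∀ x, |u x| ≤ ρ) :
    energyPairing ℰ u u h ≤ (2 * c + 3 * ρ) * ℰ u u + (c + 2 * ρ) * ℰ h h := by
  have huh := H.mul_mem u hu h hh
  have huu := H.mul_mem u hu u hu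
  have hcρ : 0 < c + ρ := by linarith
  have h1 := H.two_mul_le huh hu hcρ
  have h2 : (c + ρ)⁻¹ * ℰ (u * h) (u * h) ≤ (c + ρ) * (ℰ u u + ℰ h h) := by
    have := H.energy_mul_le hu hh (by linarith) huρ hc
    calc (c + ρ)⁻¹ * ℰ (u * h) (u * h) ≤ (c + ρ)⁻¹ * ((ρ + c) ^ 2 * (ℰ u u + ℰ h h)) := by
          gcongr
      _ = (c + ρ) * (ℰ u u + ℰ h h) := by field_simp; ring
  have h3 := H.neg_two_mul_le huu hh (by positivity : 0 < 2 * ρ)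
  have h4 : (2 * ρ)⁻¹ * ℰ (u * u) (u * u) ≤ 2 * ρ * ℰ u u := by
    calc (2 * ρ)⁻¹ * ℰ (u * u) (u * u) ≤ (2 * ρ)⁻¹ * (4 * ρ ^ 2 * ℰ u u) := by
          gcongr
          exact H.energy_mul_self_le hu hρ huρ
      _ = 2 * ρ * ℰ u u := by field_simp; ring
  rw [energyPairing]
  linarith

lemma energyPairing_min_nat_mul_le (H : IsMarkovianForm 𝒟 ℰ) (hh : h ∈ 𝒟) (hc0 : 0 ≤ c)
    (hc : ∀ x, |h x| ≤ c) (hg : g ∈ 𝒟) (hg0 : ∀ x, 0 ≤ g x) {ρ : ℝ} (hρ : 0 < ρ) (k : ℕ) :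
    energyPairing ℰ (fun x => min (g x) (k * ρ)) (fun x => min (g x) (k * ρ)) h ≤
      (2 * c + 3 * ρ) * ℰ (fun x => min (g x) (k * ρ)) (fun x => min (g x) (k * ρ)) +
        k * (c + 2 * ρ) * ℰ h h := by
  induction k with
  | zero =>
    have hzero : (fun x => min (g x) (((0 : ℕ) : ℝ) * ρ)) = (0 : ℝ) • g := by
      funext x
      simp [hg0 x]
    rw [hzero, H.energyPairing_smul_self _ hh hg, H.energy_smul _ hg]
    simp
  | succ k ih =>
    set G : X → ℝ := fun x => min (g x) ((k + 1 : ℕ) * ρ)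
    have hG : G ∈ 𝒟 := H.comp_mem _ (.min_const (by positivity)) g hg
    have hkρ : (0 : ℝ) ≤ k * ρ := by positivity
    -- cutting `G` at the level `k ρ` gives back the previous truncation and a slice of height `ρ`
    have hlow : (fun x => min (G x) (k * ρ)) = fun x => min (g x) (k * ρ) := by
      funext x
      simp only [G, min_assoc]
      rw [min_eq_right (show (k : ℝ) * ρ ≤ ((k + 1 : ℕ) : ℝ) * ρ by push_cast; linarith)]
    set w : X → ℝ := fun x => max (G x - k * ρ) 0
    have hw : w ∈ 𝒟 := H.comp_mem _ (.max_sub_const_zero hkρ) G hG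
    have hwρ : ∀ x, |w x| ≤ ρ := fun x => by
      rw [abs_of_nonneg (le_max_right _ _)]
      refine max_le ?_ hρ.le
      have : G x ≤ (k + 1 : ℕ) * ρ := min_le_right _ _
      push_cast at this
      linarith
    have hsplit := min_add_max_sub_eq G (k * ρ)
    have hcross := H.energyPairing_min_max_le hh hc0 (fun x => (le_abs_self _).trans (hc x)) hG hkρ
    have hcross_nonneg := H.nonneg_apply_min hG hkρ hw (fun x => le_max_right _ _)
      fun x hx => max_eq_right (sub_nonpos.2 hx)
    have hslice := H.energyPairing_self_le_of_abs_le hh hc0 hc hw hρ hwρ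
    rw [hlow] at hsplit hcross hcross_nonneg
    have hlow_mem : (fun x => min (g x) (k * ρ)) ∈ 𝒟 := H.comp_mem _ (.min_const hkρ) g hg
    rw [← hsplit, H.energyPairing_add_self hh hlow_mem hw, H.energy_add hlow_mem hw]
    rw [H.symm _ hw _ hlow_mem] at hcross_nonneg
    push_cast
    nlinarith

lemma energyPairing_self_le_of_nonneg_of_le (H : IsMarkovianForm 𝒟 ℰ) (hh : h ∈ 𝒟)
    (hc0 : 0 ≤ c) (hc : ∀ x, |h x| ≤ c) (hf : f ∈ 𝒟) (hf0 : ∀ x, 0 ≤ f x) (hM : 0 < M)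
    (hfM : ∀ x, f x ≤ M) {ρ : ℝ} (hρ : 0 < ρ) {n : ℕ} (hn : 0 < n) :
    energyPairing ℰ f f h ≤
      (2 * c + 3 * ρ) * ℰ f f + M ^ 2 * (c + 2 * ρ) * ℰ h h / ρ ^ 2 / n := by
  set s : ℝ := n * ρ / M with hs_def
  have hs : 0 < s := by positivity
  have hsf : (fun x => min ((s • f) x) (n * ρ)) = s • f := funext fun x => by
    refine min_eq_left ?_
    calc s * f x ≤ s * M := by gcongr; exact hfM x
      _ = n * ρ := div_mul_cancel₀ _ hM.ne'
  have hslice := H.energyPairing_min_nat_mul_le hh hc0 hc (H.smul_mem s f hf)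
    (fun x => mul_nonneg hs.le (hf0 x)) hρ n
  rw [hsf, H.energyPairing_smul_self _ hh hf, H.energy_smul _ hf] at hslice
  calc energyPairing ℰ f f h = (s ^ 2)⁻¹ * (s ^ 2 * energyPairing ℰ f f h) := by field_simp
    _ ≤ (s ^ 2)⁻¹ * ((2 * c + 3 * ρ) * (s ^ 2 * ℰ f f) + n * (c + 2 * ρ) * ℰ h h) := by
      gcongr
    _ = _ := by rw [hs_def]; field_simp

lemma energyPairing_self_le_of_nonneg (H : IsMarkovianForm 𝒟 ℰ) (hh : h ∈ 𝒟) (hc0 : 0 ≤ c)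
    (hc : ∀ x, |h x| ≤ c) (hf : f ∈ 𝒟) (hf0 : ∀ x, 0 ≤ f x) (hM : 0 < M)
    (hfM : ∀ x, f x ≤ M) : energyPairing ℰ f f h ≤ 2 * c * ℰ f f := by
  have hρ : ∀ ρ : ℝ, 0 < ρ → energyPairing ℰ f f h ≤ (2 * c + 3 * ρ) * ℰ f f := by
    intro ρ hρ
    have hlim : Tendsto (fun n : ℕ => (2 * c + 3 * ρ) * ℰ f f +
        M ^ 2 * (c + 2 * ρ) * ℰ h h / ρ ^ 2 / n) atTop (𝓝 ((2 * c + 3 * ρ) * ℰ f f)) := by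
      simpa using (tendsto_const_div_atTop_nhds_zero_nat
        (M ^ 2 * (c + 2 * ρ) * ℰ h h / ρ ^ 2)).const_add ((2 * c + 3 * ρ) * ℰ f f)
    exact ge_of_tendsto hlim (eventually_atTop.2 ⟨1, fun n hn =>
      H.energyPairing_self_le_of_nonneg_of_le hh hc0 hc hf hf0 hM hfM hρ hn⟩)
  have := nonneg_of_forall_pos_nonneg_add_mul (a := 2 * c * ℰ f f - energyPairing ℰ f f h)
    (b := 3 * ℰ f f) fun ρ hρ' => by linarith [hρ ρ hρ']
  linarith

lemma energyPairing_self_le (H : IsMarkovianForm 𝒟 ℰ) (hh : h ∈ 𝒟) (hc0 : 0 ≤ c)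
    (hc : ∀ x, |h x| ≤ c) (hf : f ∈ 𝒟) (hfb : ∃ C, ∀ x, |f x| ≤ C) :
    energyPairing ℰ f f h ≤ 2 * c * ℰ f f := by
  obtain ⟨C, hC⟩ := hfb
  have hM : 0 < max C 1 := lt_max_of_lt_right one_pos
  have hfM : ∀ x, |f x| ≤ max C 1 := fun x => (hC x).trans (le_max_left _ _)
  set u : X → ℝ := fun x => min (f x) 0
  set v : X → ℝ := fun x => max (f x - 0) 0
  have hu : u ∈ 𝒟 := H.comp_mem _ (.min_const le_rfl) f hf
  have hv : v ∈ 𝒟 := H.comp_mem _ (.max_sub_const_zero le_rfl) f hf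
  have hneg : energyPairing ℰ u u h ≤ 2 * c * ℰ u u := by
    have hu_le : ∀ x, -1 * min (f x) 0 ≤ max C 1 := fun x => by
      rw [neg_one_mul, neg_le]
      exact (neg_le_neg (hfM x)).trans (le_min (neg_abs_le _) (neg_nonpos.2 (abs_nonneg _)))
    have := H.energyPairing_self_le_of_nonneg hh hc0 hc (H.smul_mem (-1) u hu)
      (fun x => by simp [u]) hM hu_le
    rwa [H.energyPairing_smul_self _ hh hu, H.energy_smul _ hu, neg_one_sq, one_mul,
      one_mul] at this
  have hpos := H.energyPairing_self_le_of_nonneg hh hc0 hc hv (fun x => le_max_right _ _) hM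
    fun x => max_le (by simpa using (le_abs_self _).trans (hfM x)) hM.le
  have hcross := H.energyPairing_min_max_le hh hc0 (fun x => (le_abs_self _).trans (hc x)) hf
    le_rfl
  rw [← min_add_max_sub_eq f 0, H.energyPairing_add_self hh hu hv, H.energy_add hu hv]
  linarith

end IsMarkovianForm

theorem statement_1_general {X : Type*} (𝒟 : Set (X → ℝ))
    (ℰ : (X → ℝ) → (X → ℝ) → ℝ)
    (hbdd : ∀ f ∈ 𝒟, ∃ C : ℝ, ∀ x, |f x| ≤ C)
    (hadd : ∀ f ∈ 𝒟, ∀ g ∈ 𝒟, f + g ∈ 𝒟)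
    (hsmul : ∀ c : ℝ, ∀ f ∈ 𝒟, c • f ∈ 𝒟)
    (hmul : ∀ f ∈ 𝒟, ∀ g ∈ 𝒟, f * g ∈ 𝒟)
    (hnc : ∀ F : ℝ → ℝ, NormalContraction F → ∀ f ∈ 𝒟, F ∘ f ∈ 𝒟)
    (hsym : ∀ f ∈ 𝒟, ∀ g ∈ 𝒟, ℰ f g = ℰ g f)
    (hlin_add : ∀ f ∈ 𝒟, ∀ g ∈ 𝒟, ∀ h ∈ 𝒟, ℰ (f + g) h = ℰ f h + ℰ g h)
    (hlin_smul : ∀ c : ℝ, ∀ f ∈ 𝒟, ∀ g ∈ 𝒟, ℰ (c • f) g = c * ℰ f g)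
    (hnonneg : ∀ f ∈ 𝒟, 0 ≤ ℰ f f)
    (hop : ∀ F : ℝ → ℝ, NormalContraction F → ∀ f ∈ 𝒟, ℰ (F ∘ f) (F ∘ f) ≤ ℰ f f) :
    ∀ f ∈ 𝒟, ∀ h ∈ 𝒟,
      |2 * ℰ (f * h) f - ℰ (f * f) h| ≤ 2 * supNorm h * ℰ f f := by
  intro f hf h hh
  have H : IsMarkovianForm 𝒟 ℰ :=
    ⟨⟨hadd, hsmul, hsym, hlin_add, hlin_smul, hnonneg⟩, hmul, hnc, hop⟩
  have hc := abs_le_supNorm (hbdd h hh)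
  have hup := H.energyPairing_self_le hh (supNorm_nonneg h) hc hf (hbdd f hf)
  have hlow := H.energyPairing_self_le (H.smul_mem (-1) h hh) (supNorm_nonneg h)
    (by simpa using hc) hf (hbdd f hf)
  rw [H.energyPairing_self_smul _ hh hf] at hlow
  rw [energyPairing] at hup hlow
  rw [abs_le]
  constructor <;> linarith

/-- Theorem (boundedness of the functionals `L_f`): under the same hypotheses as for
positivity, `‖L_f‖_{𝒟'} ≤ 2ℰ(f)`, i.e. `|2ℰ(f·h, f) − ℰ(f², h)| ≤ 2‖h‖_sup ℰ(f,f)`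
for all `f, h ∈ 𝒟`. -/
theorem statement_1 {X : Type*} [Nonempty X] (𝒟 : Set (X → ℝ))
    (ℰ : (X → ℝ) → (X → ℝ) → ℝ)
    (hbdd : ∀ f ∈ 𝒟, ∃ C : ℝ, ∀ x, |f x| ≤ C)
    (hadd : ∀ f ∈ 𝒟, ∀ g ∈ 𝒟, f + g ∈ 𝒟)
    (hsmul : ∀ c : ℝ, ∀ f ∈ 𝒟, c • f ∈ 𝒟)
    (hmul : ∀ f ∈ 𝒟, ∀ g ∈ 𝒟, f * g ∈ 𝒟)
    (hnc : ∀ F : ℝ → ℝ, NormalContraction F → ∀ f ∈ 𝒟, F ∘ f ∈ 𝒟)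
    (hC1 : ∀ f ∈ 𝒟, ∀ g ∈ 𝒟, ∀ φ : ℝ × ℝ → ℝ, ContDiff ℝ 1 φ → HasCompactSupport φ →
      φ (0, 0) = 0 → (fun x => φ (f x, g x)) ∈ 𝒟)
    (hsym : ∀ f ∈ 𝒟, ∀ g ∈ 𝒟, ℰ f g = ℰ g f)
    (hlin_add : ∀ f ∈ 𝒟, ∀ g ∈ 𝒟, ∀ h ∈ 𝒟, ℰ (f + g) h = ℰ f h + ℰ g h)
    (hlin_smul : ∀ c : ℝ, ∀ f ∈ 𝒟, ∀ g ∈ 𝒟, ℰ (c • f) g = c * ℰ f g)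
    (hnonneg : ∀ f ∈ 𝒟, 0 ≤ ℰ f f)
    (hop : ∀ F : ℝ → ℝ, NormalContraction F → ∀ f ∈ 𝒟, ℰ (F ∘ f) (F ∘ f) ≤ ℰ f f)
    (hclos : SupNormClosable 𝒟 ℰ) :
    ∀ f ∈ 𝒟, ∀ h ∈ 𝒟,
      |2 * ℰ (f * h) f - ℰ (f * f) h| ≤ 2 * supNorm h * ℰ f f :=
  statement_1_general 𝒟 ℰ hbdd hadd hsmul hmul hnc hsym hlin_add hlin_smul hnonneg hop
end

section
/- Let X be a nonempty set and let 𝒟 be a vector lattice of bounded real-valued functions on X (a vector space under pointwise operations, closed under pointwise maximum and minimum) that has the Stone property. Then the linear span 𝒟₀ of 𝒟₀⁺ is uniformly dense in 𝒟: for every f ∈ 𝒟 and every ε > 0 there exists g ∈ 𝒟₀ with ‖f − g‖_sup ≤ ε. -/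
open Filter Topology

/-- For a nonnegative `f`, the set `E_f` of functions `φ ∈ 𝒟` with `0 ≤ φ ≤ 1` and
`φ = 1` on `{f > 0}`. -/
def Efam {X : Type*} (𝒟 : Set (X → ℝ)) (f : X → ℝ) : Set (X → ℝ) :=
  {φ | φ ∈ 𝒟 ∧ (∀ x, 0 ≤ φ x ∧ φ x ≤ 1) ∧ (∀ x, 0 < f x → φ x = 1)}

/-- The cone `𝒟₀⁺` of nonnegative `f ∈ 𝒟` with `E_f ≠ ∅`. -/
def D0plus {X : Type*} (𝒟 : Set (X → ℝ)) : Set (X → ℝ) :=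
  {f | f ∈ 𝒟 ∧ (∀ x, 0 ≤ f x) ∧ (Efam 𝒟 f).Nonempty}

/-
Split `f = f⁺ - f⁻`. For `h ≥ 0` in `𝒟` and `δ > 0`, the function `h - min(h, δ)` lies in
`𝒟₀⁺`: it is positive exactly where `h > δ`, and there `φ = min(h/δ, 1) ∈ 𝒟` (Stone property)
equals `1`. The error `min(h, δ)` takes values in `[0, δ]`, so
`(f⁺ - min(f⁺, ε)) - (f⁻ - min(f⁻, ε)) ∈ 𝒟₀` is uniformly `ε`-close to `f`.
-/

section VectorLattice

variable {X : Type*} {𝒟 : Set (X → ℝ)}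

theorem min_const_mem_of_stone (hsmul : ∀ c : ℝ, ∀ f ∈ 𝒟, c • f ∈ 𝒟)
    (hstone : ∀ f ∈ 𝒟, (fun x => min (f x) 1) ∈ 𝒟) {h : X → ℝ} (hh : h ∈ 𝒟)
    {δ : ℝ} (hδ : 0 < δ) : (fun x => min (h x) δ) ∈ 𝒟 := by
  have hφ := hsmul δ _ (hstone _ (hsmul δ⁻¹ h hh))
  convert hφ using 1
  funext x
  simp only [Pi.smul_apply, smul_eq_mul]
  rw [mul_min_of_nonneg _ _ hδ.le, mul_one, mul_inv_cancel_left₀ hδ.ne']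

theorem sub_min_const_mem_D0plus (hadd : ∀ f ∈ 𝒟, ∀ g ∈ 𝒟, f + g ∈ 𝒟)
    (hsmul : ∀ c : ℝ, ∀ f ∈ 𝒟, c • f ∈ 𝒟) (hstone : ∀ f ∈ 𝒟, (fun x => min (f x) 1) ∈ 𝒟)
    {h : X → ℝ} (hh : h ∈ 𝒟) (hpos : ∀ x, 0 ≤ h x) {δ : ℝ} (hδ : 0 < δ) :
    (fun x => h x - min (h x) δ) ∈ D0plus 𝒟 := by
  have hmem : (fun x => h x - min (h x) δ) ∈ 𝒟 := by
    convert hadd h hh _ (hsmul (-1) _ (min_const_mem_of_stone hsmul hstone hh hδ)) using 1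
    funext x
    simp only [Pi.add_apply, Pi.smul_apply, smul_eq_mul]
    ring
  refine ⟨hmem, fun x => sub_nonneg.2 (min_le_left _ _),
    fun x => min (δ⁻¹ * h x) 1, by simpa using hstone _ (hsmul δ⁻¹ h hh),
    fun x => ⟨le_min (mul_nonneg (inv_nonneg.2 hδ.le) (hpos x)) zero_le_one,
      min_le_right _ _⟩,
    fun x hx => ?_⟩
  have hδh : δ ≤ h x := by
    by_contra! hlt
    simp [min_eq_left hlt.le] at hx
  exact min_eq_right ((le_inv_mul_iff₀ hδ).2 (by simpa using hδh))

end VectorLattice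

theorem supNorm_le {X : Type*} [Nonempty X] {f : X → ℝ} {c : ℝ} (hf : ∀ x, |f x| ≤ c) :
    supNorm f ≤ c :=
  ciSup_le hf

theorem statement_4_general {X : Type*} [Nonempty X] (𝒟 : Set (X → ℝ))
    (hadd : ∀ f ∈ 𝒟, ∀ g ∈ 𝒟, f + g ∈ 𝒟)
    (hsmul : ∀ c : ℝ, ∀ f ∈ 𝒟, c • f ∈ 𝒟)
    (hmax : ∀ f ∈ 𝒟, ∀ g ∈ 𝒟, (fun x => max (f x) (g x)) ∈ 𝒟)
    (hstone : ∀ f ∈ 𝒟, (fun x => min (f x) 1) ∈ 𝒟) :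
    ∀ f ∈ 𝒟, ∀ ε : ℝ, 0 < ε →
      ∃ g ∈ Submodule.span ℝ (D0plus 𝒟), supNorm (f - g) ≤ ε := by
  intro f hf ε hε
  have hzero : (0 : X → ℝ) ∈ 𝒟 := by simpa using hsmul 0 f hf
  have hpos : (fun x => max (f x) 0) ∈ 𝒟 := by simpa using hmax f hf 0 hzero
  have hneg : (fun x => max (-f x) 0) ∈ 𝒟 := by simpa using hmax _ (hsmul (-1) f hf) 0 hzero
  have happrox := fun {h : X → ℝ} (hh : h ∈ 𝒟) (h0 : ∀ x, 0 ≤ h x) =>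
    Submodule.subset_span (R := ℝ) (sub_min_const_mem_D0plus hadd hsmul hstone hh h0 hε)
  refine ⟨_, sub_mem (happrox hpos fun _ => le_max_right _ _)
    (happrox hneg fun _ => le_max_right _ _), supNorm_le fun x => ?_⟩
  simp only [Pi.sub_apply]
  set a := max (f x) 0
  set b := max (-f x) 0
  have herror : f x - ((a - min a ε) - (b - min b ε)) = min a ε - min b ε := by
    linarith [max_zero_sub_max_neg_zero_eq_self (f x)]
  rw [herror]
  exact abs_sub_le_of_nonneg_of_le (le_min (le_max_right _ _) hε.le) (min_le_right _ _)
    (le_min (le_max_right _ _) hε.le) (min_le_right _ _)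

/-- Theorem: if `𝒟` is a vector lattice of bounded functions with the Stone property,
then `𝒟₀ = span(𝒟₀⁺)` is uniformly dense in `𝒟`. -/
theorem statement_4 {X : Type*} [Nonempty X] (𝒟 : Set (X → ℝ))
    (hbdd : ∀ f ∈ 𝒟, ∃ C : ℝ, ∀ x, |f x| ≤ C)
    (hadd : ∀ f ∈ 𝒟, ∀ g ∈ 𝒟, f + g ∈ 𝒟)
    (hsmul : ∀ c : ℝ, ∀ f ∈ 𝒟, c • f ∈ 𝒟)
    (hmax : ∀ f ∈ 𝒟, ∀ g ∈ 𝒟, (fun x => max (f x) (g x)) ∈ 𝒟)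
    (hmin : ∀ f ∈ 𝒟, ∀ g ∈ 𝒟, (fun x => min (f x) (g x)) ∈ 𝒟)
    (hstone : ∀ f ∈ 𝒟, (fun x => min (f x) 1) ∈ 𝒟) :
    ∀ f ∈ 𝒟, ∀ ε : ℝ, 0 < ε →
      ∃ g ∈ Submodule.span ℝ (D0plus 𝒟), supNorm (f - g) ≤ ε :=
  statement_4_general 𝒟 hadd hsmul hmax hstone
end

section
/- Let X be a nonempty set, 𝒟 a vector lattice of bounded real-valued functions on X with the Stone property, and (ℰ,𝒟) a nonnegative definite symmetric bilinear form on which the unit contraction operates. Then: (i) for every f ∈ 𝒟 with f ≥ 0 and every φ ∈ 𝒟 with 0 ≤ φ(x) ≤ 1 for all x and φ(x) = 1 whenever f(x) > 0, one has ℰ(f,φ) ≥ 0; (ii) for all f, g ∈ 𝒟 with f ≥ 0, g ≥ 0 and min(f(x),g(x)) = 0 for all x ∈ X, one has ℰ(f,g) ≤ 0. -/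
/-
If `T₁ ∘ (ψ + a • u) = ψ` for every `a > 0`, the contraction property gives
`ℰ(ψ) ≤ ℰ(ψ + a u) = ℰ(ψ) + 2a ℰ(u, ψ) + a² ℰ(u)`, and letting `a → 0⁺` yields `ℰ(u, ψ) ≥ 0`.
Such a `ψ` is any `[0,1]`-valued function equal to `1` where `u > 0` and to `0` where `u < 0`.
For (i) take `ψ = φ`, `u = f`; for (ii) take `ψ = f / c` with `c` an upper bound of `f`, and
`u = -g`, which is negative only where `f` vanishes.
-/

open Filter Topology

def unitContraction (t : ℝ) : ℝ := min (max t 0) 1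

theorem unitContraction_of_nonneg_of_le_one {t : ℝ} (h₀ : 0 ≤ t) (h₁ : t ≤ 1) :
    unitContraction t = t := by
  rw [unitContraction, max_eq_left h₀, min_eq_left h₁]

theorem unitContraction_of_nonpos {t : ℝ} (h : t ≤ 0) : unitContraction t = 0 := by
  rw [unitContraction, max_eq_right h, min_eq_left zero_le_one]

theorem unitContraction_of_one_le {t : ℝ} (h : 1 ≤ t) : unitContraction t = 1 := by
  rw [unitContraction, max_eq_left (zero_le_one.trans h), min_eq_right h]

theorem unitContraction_comp_add_smul_eq {X : Type*} {ψ u : X → ℝ}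
    (hψ : ∀ x, 0 ≤ ψ x ∧ ψ x ≤ 1) (hpos : ∀ x, 0 < u x → ψ x = 1)
    (hneg : ∀ x, u x < 0 → ψ x = 0) {a : ℝ} (ha : 0 ≤ a) :
    unitContraction ∘ (ψ + a • u) = ψ := by
  funext x
  simp only [Function.comp_apply, Pi.add_apply, Pi.smul_apply, smul_eq_mul]
  rcases lt_trichotomy (u x) 0 with hu | hu | hu
  · rw [hneg x hu, zero_add, unitContraction_of_nonpos (mul_nonpos_of_nonneg_of_nonpos ha hu.le)]
  · rw [hu, mul_zero, add_zero, unitContraction_of_nonneg_of_le_one (hψ x).1 (hψ x).2]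
  · rw [hpos x hu, unitContraction_of_one_le (le_add_of_nonneg_right (mul_nonneg ha hu.le))]

theorem nonneg_of_forall_pos_nonneg_mul_add_sq_mul {b c : ℝ}
    (h : ∀ a : ℝ, 0 < a → 0 ≤ a * b + a ^ 2 * c) : 0 ≤ b := by
  have hlin : ∀ a : ℝ, 0 < a → 0 ≤ b + a * c := fun a ha =>
    nonneg_of_mul_nonneg_right (by linarith [h a ha]) ha
  have hlim : Tendsto (fun a : ℝ => b + a * c) (𝓝[>] 0) (𝓝 b) := tendsto_nhdsWithin_of_tendsto_nhds
    ((continuous_const.add (continuous_id.mul continuous_const)).tendsto' 0 b (by simp))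
  exact ge_of_tendsto hlim (eventually_nhdsWithin_of_forall hlin)

theorem form_add_smul_self {X : Type*} {𝒟 : Set (X → ℝ)} {ℰ : (X → ℝ) → (X → ℝ) → ℝ}
    (hadd : ∀ f ∈ 𝒟, ∀ g ∈ 𝒟, f + g ∈ 𝒟)
    (hsmul : ∀ c : ℝ, ∀ f ∈ 𝒟, c • f ∈ 𝒟)
    (hsym : ∀ f ∈ 𝒟, ∀ g ∈ 𝒟, ℰ f g = ℰ g f)
    (hlin_add : ∀ f ∈ 𝒟, ∀ g ∈ 𝒟, ∀ h ∈ 𝒟, ℰ (f + g) h = ℰ f h + ℰ g h)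
    (hlin_smul : ∀ c : ℝ, ∀ f ∈ 𝒟, ∀ g ∈ 𝒟, ℰ (c • f) g = c * ℰ f g)
    {ψ u : X → ℝ} (hψ : ψ ∈ 𝒟) (hu : u ∈ 𝒟) (a : ℝ) :
    ℰ (ψ + a • u) (ψ + a • u) = ℰ ψ ψ + 2 * a * ℰ u ψ + a ^ 2 * ℰ u u := by
  have hau := hsmul a u hu
  have hs := hadd ψ hψ _ hau
  rw [hlin_add ψ hψ _ hau _ hs, hsym ψ hψ _ hs, hsym _ hau _ hs, hlin_add ψ hψ _ hau _ hψ,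
    hlin_add ψ hψ _ hau _ hau, hsym ψ hψ _ hau, hlin_smul a u hu _ hψ, hlin_smul a u hu _ hau,
    hsym u hu _ hau, hlin_smul a u hu _ hu]
  ring

theorem form_nonneg_of_unitContraction_comp_add_smul_eq {X : Type*} {𝒟 : Set (X → ℝ)}
    {ℰ : (X → ℝ) → (X → ℝ) → ℝ}
    (hadd : ∀ f ∈ 𝒟, ∀ g ∈ 𝒟, f + g ∈ 𝒟)
    (hsmul : ∀ c : ℝ, ∀ f ∈ 𝒟, c • f ∈ 𝒟)
    (hsym : ∀ f ∈ 𝒟, ∀ g ∈ 𝒟, ℰ f g = ℰ g f)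
    (hlin_add : ∀ f ∈ 𝒟, ∀ g ∈ 𝒟, ∀ h ∈ 𝒟, ℰ (f + g) h = ℰ f h + ℰ g h)
    (hlin_smul : ∀ c : ℝ, ∀ f ∈ 𝒟, ∀ g ∈ 𝒟, ℰ (c • f) g = c * ℰ f g)
    (hT1 : ∀ f ∈ 𝒟, ℰ (unitContraction ∘ f) (unitContraction ∘ f) ≤ ℰ f f)
    {ψ u : X → ℝ} (hψ : ψ ∈ 𝒟) (hu : u ∈ 𝒟)
    (hfix : ∀ a : ℝ, 0 < a → unitContraction ∘ (ψ + a • u) = ψ) : 0 ≤ ℰ u ψ := by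
  suffices 0 ≤ 2 * ℰ u ψ by linarith
  refine nonneg_of_forall_pos_nonneg_mul_add_sq_mul (c := ℰ u u) fun a ha => ?_
  have hcontr := hT1 _ (hadd ψ hψ _ (hsmul a u hu))
  rw [hfix a ha, form_add_smul_self hadd hsmul hsym hlin_add hlin_smul hψ hu] at hcontr
  linarith

theorem statement_5_general {X : Type*} (𝒟 : Set (X → ℝ))
    (ℰ : (X → ℝ) → (X → ℝ) → ℝ)
    (hbdd : ∀ f ∈ 𝒟, ∃ C : ℝ, ∀ x, |f x| ≤ C)
    (hadd : ∀ f ∈ 𝒟, ∀ g ∈ 𝒟, f + g ∈ 𝒟)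
    (hsmul : ∀ c : ℝ, ∀ f ∈ 𝒟, c • f ∈ 𝒟)
    (hsym : ∀ f ∈ 𝒟, ∀ g ∈ 𝒟, ℰ f g = ℰ g f)
    (hlin_add : ∀ f ∈ 𝒟, ∀ g ∈ 𝒟, ∀ h ∈ 𝒟, ℰ (f + g) h = ℰ f h + ℰ g h)
    (hlin_smul : ∀ c : ℝ, ∀ f ∈ 𝒟, ∀ g ∈ 𝒟, ℰ (c • f) g = c * ℰ f g)
    (hT1 : ∀ f ∈ 𝒟, unitContraction ∘ f ∈ 𝒟 ∧
      ℰ (unitContraction ∘ f) (unitContraction ∘ f) ≤ ℰ f f) :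
    (∀ f ∈ 𝒟, (∀ x, 0 ≤ f x) → ∀ φ ∈ 𝒟, (∀ x, 0 ≤ φ x ∧ φ x ≤ 1) →
      (∀ x, 0 < f x → φ x = 1) → 0 ≤ ℰ f φ) ∧
    (∀ f ∈ 𝒟, ∀ g ∈ 𝒟, (∀ x, 0 ≤ f x) → (∀ x, 0 ≤ g x) →
      (∀ x, min (f x) (g x) = 0) → ℰ f g ≤ 0) := by
  have key := fun {ψ u : X → ℝ} => form_nonneg_of_unitContraction_comp_add_smul_eq (ψ := ψ)
    (u := u) hadd hsmul hsym hlin_add hlin_smul fun f hf => (hT1 f hf).2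
  refine ⟨fun f hf hf₀ φ hφ hφ₀₁ hφf => key hφ hf fun a ha => ?_,
    fun f hf g hg hf₀ hg₀ hfg => ?_⟩
  · exact unitContraction_comp_add_smul_eq hφ₀₁ hφf (fun x hx => absurd hx (hf₀ x).not_gt) ha.le
  obtain ⟨c, hc, hfc⟩ : ∃ c > 0, ∀ x, f x ≤ c := by
    obtain ⟨C, hC⟩ := hbdd f hf
    exact ⟨max C 1, lt_max_of_lt_right one_pos,
      fun x => (le_abs_self _).trans ((hC x).trans (le_max_left _ _))⟩
  have hψ : ∀ x, 0 ≤ (c⁻¹ • f) x ∧ (c⁻¹ • f) x ≤ 1 := fun x =>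
    ⟨mul_nonneg (inv_nonneg.2 hc.le) (hf₀ x), (inv_mul_le_one₀ hc).2 (hfc x)⟩
  have hf_of_g : ∀ x, 0 < g x → f x = 0 := fun x hgx =>
    (hf₀ x).eq_or_lt.elim Eq.symm fun hfx => absurd (hfg x) (lt_min hfx hgx).ne'
  have hk := key (hsmul c⁻¹ f hf) (hsmul (-1) g hg) fun a ha =>
    unitContraction_comp_add_smul_eq hψ
      (fun x hx => absurd hx (by simpa using hg₀ x))
      (fun x hx => by simp [hf_of_g x (by simpa using hx)]) ha.le
  rw [hlin_smul _ g hg _ (hsmul _ f hf), hsym g hg _ (hsmul _ f hf), hlin_smul _ f hf g hg] at hk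
  exact nonpos_of_mul_nonpos_left (by linarith) (inv_pos.2 hc)

/-- Theorem: for a vector lattice `𝒟` with the Stone property and a nonnegative definite
symmetric bilinear form `(ℰ,𝒟)` on which the unit contraction operates:
(i) `ℰ(f,φ) ≥ 0` for nonnegative `f ∈ 𝒟` and `φ ∈ E_f`;
(ii) `ℰ(f,g) ≤ 0` for nonnegative `f, g ∈ 𝒟` with `f ∧ g = 0`. -/
theorem statement_5 {X : Type*} [Nonempty X] (𝒟 : Set (X → ℝ))
    (ℰ : (X → ℝ) → (X → ℝ) → ℝ)
    (hbdd : ∀ f ∈ 𝒟, ∃ C : ℝ, ∀ x, |f x| ≤ C)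
    (hadd : ∀ f ∈ 𝒟, ∀ g ∈ 𝒟, f + g ∈ 𝒟)
    (hsmul : ∀ c : ℝ, ∀ f ∈ 𝒟, c • f ∈ 𝒟)
    (hmax : ∀ f ∈ 𝒟, ∀ g ∈ 𝒟, (fun x => max (f x) (g x)) ∈ 𝒟)
    (hmin : ∀ f ∈ 𝒟, ∀ g ∈ 𝒟, (fun x => min (f x) (g x)) ∈ 𝒟)
    (hstone : ∀ f ∈ 𝒟, (fun x => min (f x) 1) ∈ 𝒟)
    (hsym : ∀ f ∈ 𝒟, ∀ g ∈ 𝒟, ℰ f g = ℰ g f)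
    (hlin_add : ∀ f ∈ 𝒟, ∀ g ∈ 𝒟, ∀ h ∈ 𝒟, ℰ (f + g) h = ℰ f h + ℰ g h)
    (hlin_smul : ∀ c : ℝ, ∀ f ∈ 𝒟, ∀ g ∈ 𝒟, ℰ (c • f) g = c * ℰ f g)
    (hnonneg : ∀ f ∈ 𝒟, 0 ≤ ℰ f f)
    (hT1 : ∀ f ∈ 𝒟, unitContraction ∘ f ∈ 𝒟 ∧
      ℰ (unitContraction ∘ f) (unitContraction ∘ f) ≤ ℰ f f) :
    (∀ f ∈ 𝒟, (∀ x, 0 ≤ f x) → ∀ φ ∈ 𝒟, (∀ x, 0 ≤ φ x ∧ φ x ≤ 1) →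
      (∀ x, 0 < f x → φ x = 1) → 0 ≤ ℰ f φ) ∧
    (∀ f ∈ 𝒟, ∀ g ∈ 𝒟, (∀ x, 0 ≤ f x) → (∀ x, 0 ≤ g x) →
      (∀ x, min (f x) (g x) = 0) → ℰ f g ≤ 0) :=
  statement_5_general 𝒟 ℰ hbdd hadd hsmul hsym hlin_add hlin_smul hT1
end

section
/- Let X be a nonempty set and let 𝒟 be an algebra of bounded real-valued functions on X that is stable under normal contractions and contains a strictly positive function χ (χ(x) > 0 for all x ∈ X). Let σ(𝒟) be the smallest σ-algebra on X with respect to which every member of 𝒟 is measurable, and let m be a finite measure on σ(𝒟). Then the set of m-classes of members of 𝒟 is dense in L²(X,σ(𝒟),m). -/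
/-!
The sets `s` whose indicator is a pointwise limit of a sequence in `𝒟` form an algebra of sets:
complements because `1 = lim min(nχ, 1)` is such a limit, intersections because `𝒟` is closed
under products. Steep ramps `n · min((f - a)⁺, 1/n)` put every `{f > a}` with `a ≥ 0` in this
algebra; applied to `f⁺` and `f⁻` this makes each `f ∈ 𝒟` measurable for the σ-algebra
generated by the algebra. That σ-algebra is thus `σ(𝒟)`, so the algebra is measure-dense for the
finite measure `m`. Truncating the approximating sequences by `min(|·|, 1)` keeps them in `𝒟`
and makes them uniformly bounded, so they converge in `L²`, and indicators of measure-dense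
families span a dense subspace of `L²`.
-/

open Filter Topology MeasureTheory

open Set
open scoped ENNReal

theorem map₂_mem_seqClosure {α β γ : Type*} [TopologicalSpace α] [TopologicalSpace β]
    [TopologicalSpace γ] {s : Set α} {t : Set β} {u : Set γ} {φ : α → β → γ}
    (hφ : Continuous (Function.uncurry φ)) (hstu : ∀ a ∈ s, ∀ b ∈ t, φ a b ∈ u)
    {a : α} {b : β} (ha : a ∈ seqClosure s) (hb : b ∈ seqClosure t) :
    φ a b ∈ seqClosure u := by
  obtain ⟨x, hxs, hxa⟩ := ha
  obtain ⟨y, hyt, hyb⟩ := hb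
  exact ⟨fun n => φ (x n) (y n), fun n => hstu _ (hxs n) _ (hyt n),
    (hφ.tendsto (a, b)).comp (hxa.prodMk_nhds hyb)⟩

theorem Continuous.mapsTo_seqClosure {α β : Type*} [TopologicalSpace α] [TopologicalSpace β]
    {s : Set α} {t : Set β} {φ : α → β} (hφ : Continuous φ) (hst : MapsTo φ s t) :
    MapsTo φ (seqClosure s) (seqClosure t) := by
  rintro a ⟨x, hxs, hxa⟩
  exact ⟨fun n => φ (x n), fun n => hst (hxs n), (hφ.tendsto a).comp hxa⟩

section Lp

variable {X E : Type*} [MeasurableSpace X] {μ : Measure X} [NormedAddCommGroup E] {p : ℝ≥0∞}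

theorem unifIntegrable_of_forall_norm_le {ι : Type*} (hp : 1 ≤ p) (hp' : p ≠ ∞)
    {f : ι → X → E} (hf : ∀ i, AEStronglyMeasurable (f i) μ) {C : ℝ}
    (hC : ∀ i x, ‖f i x‖ ≤ C) :
    UnifIntegrable f p μ := by
  refine unifIntegrable_of hp hp' hf fun ε _ => ⟨C.toNNReal + 1, fun i => ?_⟩
  have hempty : {x | C.toNNReal + 1 ≤ ‖f i x‖₊} = ∅ := by
    refine eq_empty_of_forall_notMem fun x hx => ?_
    have hle : ‖f i x‖₊ ≤ C.toNNReal := by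
      rw [← NNReal.coe_le_coe, coe_nnnorm]
      exact (hC i x).trans (Real.le_coe_toNNReal C)
    exact absurd (hx.trans hle) (by simp)
  simp [hempty]

theorem tendsto_toLp_of_tendsto_of_forall_norm_le [IsFiniteMeasure μ] [Fact (1 ≤ p)]
    (hp : p ≠ ∞) {f : ℕ → X → E} {g : X → E} (hf : ∀ n, MemLp (f n) p μ) (hg : MemLp g p μ)
    {C : ℝ} (hC : ∀ n x, ‖f n x‖ ≤ C)
    (hfg : ∀ᵐ x ∂μ, Tendsto (fun n => f n x) atTop (𝓝 (g x))) :
    Tendsto (fun n => (hf n).toLp (f n)) atTop (𝓝 (hg.toLp g)) :=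
  (Lp.tendsto_Lp_iff_tendsto_eLpNorm'' f hf g hg).2 <|
    tendsto_Lp_finite_of_tendsto_ae Fact.out hp (fun n => (hf n).1) hg
      (unifIntegrable_of_forall_norm_le Fact.out hp (fun n => (hf n).1) hC) hfg

/-- Members of `D` that are not `p`-integrable simply have no class in `Lp E p μ`. -/
def Submodule.lpClasses {𝕜 : Type*} [NormedRing 𝕜] [Module 𝕜 E] [IsBoundedSMul 𝕜 E]
    (D : Submodule 𝕜 (X → E)) (p : ℝ≥0∞) (μ : Measure X) : Submodule 𝕜 (Lp E p μ) where
  carrier := {u | ∃ f ∈ D, ⇑u =ᵐ[μ] f}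
  add_mem' := by
    rintro u v ⟨f, hf, hu⟩ ⟨g, hg, hv⟩
    exact ⟨f + g, D.add_mem hf hg, (Lp.coeFn_add u v).trans (hu.add hv)⟩
  zero_mem' := ⟨0, D.zero_mem, Lp.coeFn_zero E p μ⟩
  smul_mem' := by
    rintro c u ⟨f, hf, hu⟩
    exact ⟨c • f, D.smul_mem c hf, (Lp.coeFn_smul c u).trans (hu.const_smul c)⟩

variable {D : Submodule ℝ (X → ℝ)} (hD : ∀ f ∈ D, Measurable f)
include hD

theorem indicatorConstLp_mem_topologicalClosure_lpClasses [IsFiniteMeasure μ] [Fact (1 ≤ p)]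
    (hp : p ≠ ∞) {s : Set X} (hs : MeasurableSet s) (hμs : μ s ≠ ∞) (c : ℝ)
    (hsD : s.indicator 1 ∈ seqClosure {f | f ∈ D ∧ ∀ x, |f x| ≤ 1}) :
    indicatorConstLp p hs hμs c ∈ (D.lpClasses p μ).topologicalClosure := by
  obtain ⟨g, hgD, hgs⟩ := hsD
  have hbound (n : ℕ) (x : X) : ‖(c • g n) x‖ ≤ |c| := by
    simpa [abs_mul] using mul_le_of_le_one_right (abs_nonneg c) ((hgD n).2 x)
  have hgLp (n : ℕ) : MemLp (c • g n) p μ :=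
    .of_bound ((hD _ (hgD n).1).const_smul c).aestronglyMeasurable _ (ae_of_all _ (hbound n))
  have hlim (x : X) :
      Tendsto (fun n => (c • g n) x) atTop (𝓝 (s.indicator (fun _ => c) x)) := by
    have := ((tendsto_pi_nhds.1 hgs) x).const_mul c
    by_cases hx : x ∈ s <;> simpa [hx] using this
  refine (D.lpClasses p μ).isClosed_topologicalClosure.mem_of_tendsto
    (tendsto_toLp_of_tendsto_of_forall_norm_le hp hgLp _ hbound (ae_of_all _ hlim))
    (Eventually.of_forall fun n => (D.lpClasses p μ).le_topologicalClosure ?_)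
  exact ⟨c • g n, D.smul_mem c (hgD n).1, (hgLp n).coeFn_toLp⟩

theorem dense_lpClasses_of_measureDense [IsFiniteMeasure μ] [Fact (1 ≤ p)] [Fact (p ≠ ∞)]
    {𝒜 : Set (Set X)} (h𝒜 : μ.MeasureDense 𝒜)
    (h𝒜D : ∀ s ∈ 𝒜, s.indicator 1 ∈ seqClosure {f | f ∈ D ∧ ∀ x, |f x| ≤ 1}) :
    Dense (D.lpClasses p μ : Set (Lp ℝ p μ)) := by
  set V := (D.lpClasses p μ).topologicalClosure
  have hV : IsClosed (V : Set (Lp ℝ p μ)) := (D.lpClasses p μ).isClosed_topologicalClosure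
  suffices ∀ u, u ∈ V by
    simpa [Dense, ← Submodule.topologicalClosure_coe] using this
  refine Lp.induction Fact.out (· ∈ V) (fun c s hs hμs => ?_)
    (fun _ _ _ _ _ hf hg => V.add_mem hf hg) hV
  rw [Lp.simpleFunc.coe_indicatorConst]
  refine closure_minimal ?_ hV (h𝒜.indicatorConstLp_subset_closure p c ⟨s, hs, hμs.ne, rfl⟩)
  rintro - ⟨t, ht, hμt, rfl⟩
  exact indicatorConstLp_mem_topologicalClosure_lpClasses hD Fact.out _ _ _ (h𝒜D t ht)

end Lp

theorem NormalContraction.of_lipschitzWith {F : ℝ → ℝ} (h0 : F 0 = 0)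
    (hF : LipschitzWith 1 F) : NormalContraction F :=
  ⟨h0, fun x y => by simpa [Real.dist_eq] using hF.dist_le_mul x y⟩

theorem normalContraction_max_zero : NormalContraction fun t => max t 0 :=
  .of_lipschitzWith (max_self 0) (LipschitzWith.id.max_const 0)

theorem normalContraction_min_abs_one : NormalContraction fun t => min |t| 1 :=
  .of_lipschitzWith (by simp) (lipschitzWith_one_norm.min_const 1)

theorem normalContraction_ramp {a ε : ℝ} (ha : 0 ≤ a) (hε : 0 ≤ ε) :
    NormalContraction fun t => min (max (t - a) 0) ε :=
  .of_lipschitzWith (by simp [ha, hε])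
    (((IsometryEquiv.subRight a).isometry.lipschitz.max_const 0).min_const ε)

theorem tendsto_ramp (a t : ℝ) :
    Tendsto (fun n : ℕ => ((n : ℝ) + 1) * min (max (t - a) 0) (1 / ((n : ℝ) + 1))) atTop
      (𝓝 ((Ioi a).indicator 1 t)) := by
  rcases lt_or_ge a t with hat | hta
  · have hev : ∀ᶠ n : ℕ in atTop, 1 / ((n : ℝ) + 1) < t - a :=
      (tendsto_order.1 tendsto_one_div_add_atTop_nhds_zero_nat).2 _ (sub_pos.2 hat)
    refine tendsto_const_nhds.congr' (hev.mono fun n hn => ?_)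
    dsimp only
    rw [max_eq_left (sub_pos.2 hat).le, min_eq_right hn.le, mul_one_div_cancel (by positivity)]
    simp [hat]
  · have hzero (n : ℕ) : min (max (t - a) 0) (1 / ((n : ℝ) + 1)) = 0 := by
      rw [max_eq_right (sub_nonpos.2 hta), min_eq_left (by positivity)]
    simp only [hzero, mul_zero, indicator_of_notMem (show t ∉ Ioi a from not_lt.2 hta)]
    exact tendsto_const_nhds

section IndicatorLimits

variable {X : Type*} {A : NonUnitalSubalgebra ℝ (X → ℝ)}

theorem isSetAlgebra_indicator_mem_seqClosure
    (h1 : (1 : X → ℝ) ∈ seqClosure (A : Set (X → ℝ))) :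
    IsSetAlgebra {s : Set X | s.indicator 1 ∈ seqClosure (A : Set (X → ℝ))} := by
  have hcompl {s : Set X} (hs : s.indicator 1 ∈ seqClosure (A : Set (X → ℝ))) :
      sᶜ.indicator 1 ∈ seqClosure (A : Set (X → ℝ)) := by
    rw [indicator_compl]
    exact map₂_mem_seqClosure continuous_sub (fun f hf g hg => A.sub_mem hf hg) h1 hs
  have hinter {s t : Set X} (hs : s.indicator 1 ∈ seqClosure (A : Set (X → ℝ)))
      (ht : t.indicator 1 ∈ seqClosure (A : Set (X → ℝ))) :
      (s ∩ t).indicator 1 ∈ seqClosure (A : Set (X → ℝ)) := by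
    rw [inter_indicator_one]
    exact map₂_mem_seqClosure continuous_mul (fun f hf g hg => A.mul_mem hf hg) hs ht
  refine ⟨?_, fun s hs => hcompl hs, fun s t hs ht => ?_⟩
  · show (∅ : Set X).indicator (1 : X → ℝ) ∈ seqClosure (A : Set (X → ℝ))
    rw [indicator_empty']
    exact subset_seqClosure A.zero_mem
  · show (s ∪ t).indicator (1 : X → ℝ) ∈ seqClosure (A : Set (X → ℝ))
    rw [← compl_compl (s ∪ t), compl_union]
    exact hcompl (hinter (hcompl hs) (hcompl ht))

theorem measurableSet_of_indicator_mem_seqClosure [MeasurableSpace X] {S : Set (X → ℝ)}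
    (hS : ∀ f ∈ S, Measurable f) {s : Set X} (hs : s.indicator 1 ∈ seqClosure S) :
    MeasurableSet s := by
  obtain ⟨g, hgS, hgs⟩ := hs
  exact (measurable_indicator_const_iff (1 : ℝ)).1
    (measurable_of_tendsto_metrizable (fun n => hS _ (hgS n)) hgs)

variable (hnc : ∀ F : ℝ → ℝ, NormalContraction F → ∀ f ∈ A, F ∘ f ∈ A)
include hnc

theorem one_mem_seqClosure_of_pos {χ : X → ℝ} (hχ : χ ∈ A) (hχpos : ∀ x, 0 < χ x) :
    (1 : X → ℝ) ∈ seqClosure (A : Set (X → ℝ)) := by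
  refine ⟨fun n => (fun t => min |t| 1) ∘ ((n : ℝ) • χ),
    fun n => hnc _ normalContraction_min_abs_one _ (A.smul_mem _ hχ),
    tendsto_pi_nhds.2 fun x => ?_⟩
  have hlarge : ∀ᶠ n : ℕ in atTop, 1 ≤ (n : ℝ) * χ x :=
    (tendsto_natCast_atTop_atTop.atTop_mul_const (hχpos x)).eventually_ge_atTop 1
  refine tendsto_const_nhds.congr' (hlarge.mono fun n hn => ?_)
  simp [abs_of_pos (zero_lt_one.trans_le hn), min_eq_right hn]

theorem indicator_preimage_Ioi_mem_seqClosure {f : X → ℝ} (hf : f ∈ A) {a : ℝ} (ha : 0 ≤ a) :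
    (f ⁻¹' Ioi a).indicator 1 ∈ seqClosure (A : Set (X → ℝ)) := by
  refine ⟨fun n => ((n : ℝ) + 1) • ((fun t => min (max (t - a) 0) (1 / ((n : ℝ) + 1))) ∘ f),
    fun n => A.smul_mem _ (hnc _ (normalContraction_ramp ha (by positivity)) f hf),
    tendsto_pi_nhds.2 fun x => ?_⟩
  have hx : (f ⁻¹' Ioi a).indicator (1 : X → ℝ) x = (Ioi a).indicator 1 (f x) := by
    by_cases h : a < f x <;> simp [h]
  rw [hx]
  exact tendsto_ramp a (f x)

theorem measurable_generateFrom_indicator_mem_seqClosure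
    (h1 : (1 : X → ℝ) ∈ seqClosure (A : Set (X → ℝ))) {f : X → ℝ} (hf : f ∈ A) :
    Measurable[MeasurableSpace.generateFrom {s | s.indicator 1 ∈ seqClosure (A : Set (X → ℝ))}]
      f := by
  have hpos {g : X → ℝ} (hg : g ∈ A) :
      Measurable[MeasurableSpace.generateFrom
        {s | s.indicator 1 ∈ seqClosure (A : Set (X → ℝ))}] fun x => max (g x) 0 := by
    refine measurable_of_Ioi fun a => MeasurableSpace.measurableSet_generateFrom ?_
    rcases lt_or_ge a 0 with ha | ha
    · have huniv : (fun x => max (g x) 0) ⁻¹' Ioi a = univ :=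
        eq_univ_of_forall fun x => ha.trans_le (le_max_right _ _)
      rw [huniv]
      simpa using h1
    · exact indicator_preimage_Ioi_mem_seqClosure hnc (hnc _ normalContraction_max_zero g hg) ha
  have hf' : -f ∈ A := by simpa using A.smul_mem (-1) hf
  convert (hpos hf).sub (hpos hf') using 1
  exact funext fun x => (max_zero_sub_max_neg_zero_eq_self (f x)).symm

theorem indicator_mem_seqClosure_abs_le_one {s : Set X}
    (hs : s.indicator 1 ∈ seqClosure (A : Set (X → ℝ))) :
    s.indicator 1 ∈ seqClosure {f | f ∈ A ∧ ∀ x, |f x| ≤ 1} := by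
  have hφ : Continuous fun f : X → ℝ => (fun t => min |t| 1) ∘ f :=
    continuous_pi fun x => (continuous_abs.min continuous_const).comp (continuous_apply x)
  have hs' := hφ.mapsTo_seqClosure (t := {f | f ∈ A ∧ ∀ x, |f x| ≤ 1})
    (fun f hf => ⟨hnc _ normalContraction_min_abs_one f hf, fun x => by
      rw [abs_of_nonneg (le_min (abs_nonneg _) zero_le_one)]
      exact min_le_right _ _⟩) hs
  convert hs' using 1
  ext x
  by_cases hx : x ∈ s <;> simp [hx]

end IndicatorLimits

theorem statement_15_general {X : Type*} [mX : MeasurableSpace X]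
    (𝒟 : Set (X → ℝ))
    (hσ : mX = ⨆ f ∈ 𝒟, MeasurableSpace.comap f (inferInstance : MeasurableSpace ℝ))
    (hadd : ∀ f ∈ 𝒟, ∀ g ∈ 𝒟, f + g ∈ 𝒟)
    (hsmul : ∀ c : ℝ, ∀ f ∈ 𝒟, c • f ∈ 𝒟)
    (hmul : ∀ f ∈ 𝒟, ∀ g ∈ 𝒟, f * g ∈ 𝒟)
    (hnc : ∀ F : ℝ → ℝ, NormalContraction F → ∀ f ∈ 𝒟, F ∘ f ∈ 𝒟)
    (χ : X → ℝ) (hχ : χ ∈ 𝒟) (hχpos : ∀ x, 0 < χ x)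
    (m : Measure X) [IsFiniteMeasure m] :
    Dense {u : Lp ℝ 2 m | ∃ f ∈ 𝒟, (⇑u : X → ℝ) =ᵐ[m] f} := by
  let A : NonUnitalSubalgebra ℝ (X → ℝ) :=
    { carrier := 𝒟
      add_mem' := fun hf hg => hadd _ hf _ hg
      zero_mem' := by simpa using hsmul 0 χ hχ
      mul_mem' := fun hf hg => hmul _ hf _ hg
      smul_mem' := hsmul }
  have hmeas (f : X → ℝ) (hf : f ∈ A) : Measurable f :=
    measurable_iff_comap_le.2 <|
      (le_iSup₂ (f := fun g (_ : g ∈ 𝒟) => MeasurableSpace.comap g _) f hf).trans hσ.ge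
  have h1 := one_mem_seqClosure_of_pos (A := A) hnc hχ hχpos
  have hgen :
      mX = MeasurableSpace.generateFrom {s | s.indicator 1 ∈ seqClosure (A : Set (X → ℝ))} :=
    le_antisymm
      (hσ.trans_le <| iSup₂_le fun f hf =>
        (measurable_generateFrom_indicator_mem_seqClosure hnc h1 hf).comap_le)
      (MeasurableSpace.generateFrom_le fun s hs =>
        measurableSet_of_indicator_mem_seqClosure hmeas hs)
  have : Fact ((2 : ℝ≥0∞) ≠ ∞) := ⟨ENNReal.ofNat_ne_top⟩
  exact dense_lpClasses_of_measureDense (D := A.toSubmodule) hmeas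
    (.of_generateFrom_isSetAlgebra_finite m (isSetAlgebra_indicator_mem_seqClosure h1) hgen)
    fun s hs => indicator_mem_seqClosure_abs_le_one hnc hs

/-- Theorem: if `𝒟` is an algebra of bounded real-valued functions, stable under normal
contractions and containing a strictly positive function `χ`, if `X` carries the
σ-algebra `σ(𝒟)` generated by `𝒟`, and if `m` is a finite measure on it, then the
`m`-classes of members of `𝒟` are dense in `L²(X,σ(𝒟),m)`. -/
theorem statement_15 {X : Type*} [Nonempty X] [mX : MeasurableSpace X]
    (𝒟 : Set (X → ℝ))
    (hσ : mX = ⨆ f ∈ 𝒟, MeasurableSpace.comap f (inferInstance : MeasurableSpace ℝ))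
    (hbdd : ∀ f ∈ 𝒟, ∃ C : ℝ, ∀ x, |f x| ≤ C)
    (hadd : ∀ f ∈ 𝒟, ∀ g ∈ 𝒟, f + g ∈ 𝒟)
    (hsmul : ∀ c : ℝ, ∀ f ∈ 𝒟, c • f ∈ 𝒟)
    (hmul : ∀ f ∈ 𝒟, ∀ g ∈ 𝒟, f * g ∈ 𝒟)
    (hnc : ∀ F : ℝ → ℝ, NormalContraction F → ∀ f ∈ 𝒟, F ∘ f ∈ 𝒟)
    (χ : X → ℝ) (hχ : χ ∈ 𝒟) (hχpos : ∀ x, 0 < χ x)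
    (m : Measure X) [IsFiniteMeasure m] :
    Dense {u : Lp ℝ 2 m | ∃ f ∈ 𝒟, (⇑u : X → ℝ) =ᵐ[m] f} :=
  statement_15_general (mX := mX) 𝒟 hσ hadd hsmul hmul hnc χ hχ hχpos m
end

section
/- Let (X,Σ,m) be a finite measure space, V a real vector space, and ℰ : V×V → ℝ a symmetric bilinear map with ℰ(f,f) ≥ 0 for all f ∈ V. Suppose Γ assigns to each f ∈ V an m-integrable function Γ(f) : X → [0,∞) such that ∫_X Γ(f) dm ≤ 2ℰ(f,f) for every f ∈ V, and such that for all f, g ∈ V one has |Γ(f)(x)^{1/2} − Γ(g)(x)^{1/2}| ≤ Γ(f−g)(x)^{1/2} for m-almost every x ∈ X. Then for every ℰ-Cauchy sequence (f_n) ⊂ V (i.e. ℰ(f_n−f_m, f_n−f_m) → 0 as n,m → ∞), the sequence (Γ(f_n))_n converges in L¹(X,m); in particular it is uniformly m-integrable: for every ε > 0 there exists δ > 0 such that for every A ∈ Σ with m(A) < δ one has sup_n ∫_A Γ(f_n) dm ≤ ε. -/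
/-!
The map `f ↦ √Γ(f)` into `L²(m)` satisfies `‖√Γ(f) - √Γ(g)‖₂ ≤ ‖√Γ(f - g)‖₂ ≤ √(2ℰ(f - g, f - g))`,
so it carries `ℰ`-Cauchy sequences to Cauchy sequences of `L²(m)`; let `G` be the limit of
`√Γ(f_n)`. Since `a² - b² = (a - b)(a + b)`, Cauchy–Schwarz gives
`‖Γ(f_n) - G²‖₁ ≤ ‖√Γ(f_n) - G‖₂ ‖√Γ(f_n) + G‖₂ → 0`, and a sequence converging in `L¹` is
uniformly integrable.
-/

open Filter Topology MeasureTheory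

lemma cauchySeq_comp_of_norm_sub_le {V E : Type*} [AddGroup V] [SeminormedAddCommGroup E]
    {H : V → E} {q : V → ℝ} (hsub : ∀ u v, ‖H u - H v‖ ≤ ‖H (u - v)‖)
    (hq : ∀ v, ‖H v‖ ^ 2 ≤ q v) {f : ℕ → V}
    (hf : ∀ ε : ℝ, 0 < ε → ∃ N, ∀ n ≥ N, ∀ k ≥ N, q (f n - f k) < ε) :
    CauchySeq (H ∘ f) := by
  refine Metric.cauchySeq_iff.2 fun ε hε => ?_
  obtain ⟨N, hN⟩ := hf (ε ^ 2) (by positivity)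
  refine ⟨N, fun n hn k hk => ?_⟩
  rw [dist_eq_norm]
  refine lt_of_pow_lt_pow_left₀ 2 hε.le ?_
  calc ‖H (f n) - H (f k)‖ ^ 2 ≤ ‖H (f n - f k)‖ ^ 2 := by gcongr; exact hsub _ _
    _ ≤ q (f n - f k) := hq _
    _ < ε ^ 2 := hN n hn k hk

namespace MeasureTheory

variable {X : Type*} [MeasurableSpace X] {m : Measure X}

lemma integral_norm_eq_toReal_eLpNorm_one {E : Type*} [NormedAddCommGroup E] {u : X → E}
    (hu : AEStronglyMeasurable u m) : ∫ x, ‖u x‖ ∂m = (eLpNorm u 1 m).toReal := by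
  rw [integral_norm_eq_lintegral_enorm hu, eLpNorm_one_eq_lintegral_enorm]

lemma UnifIntegrable.exists_forall_setIntegral_norm_le {ι E : Type*} [NormedAddCommGroup E]
    {u : ι → X → E} (hu : UnifIntegrable u 1 m) (hmeas : ∀ i, AEStronglyMeasurable (u i) m)
    {ε : ℝ} (hε : 0 < ε) :
    ∃ δ : ℝ, 0 < δ ∧ ∀ i s, MeasurableSet s → m s ≤ ENNReal.ofReal δ →
      ∫ x in s, ‖u i x‖ ∂m ≤ ε := by
  obtain ⟨δ, hδ, hsmall⟩ := hu hε
  refine ⟨δ, hδ, fun i s hs hms => ?_⟩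
  have h := hsmall i s hs hms
  rw [eLpNorm_indicator_eq_eLpNorm_restrict hs] at h
  rw [integral_norm_eq_toReal_eLpNorm_one (hmeas i).restrict]
  exact ENNReal.toReal_le_of_le_ofReal hε.le h

lemma Integrable.memLp_two_sqrt {u : X → ℝ} (hu : Integrable u m) :
    MemLp (fun x => √(u x)) 2 m := by
  refine (memLp_two_iff_integrable_sq
    (Real.continuous_sqrt.comp_aestronglyMeasurable hu.aestronglyMeasurable)).2 ?_
  simpa only [Real.sq_sqrt'] using hu.pos_part

lemma L2.norm_sq_eq_integral_sq (F : Lp ℝ 2 m) : ‖F‖ ^ 2 = ∫ x, F x ^ 2 ∂m := by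
  rw [← real_inner_self_eq_norm_sq, L2.inner_def]
  simp only [RCLike.inner_apply, conj_trivial, sq]

lemma MemLp.norm_toLp_sq {u : X → ℝ} (hu : MemLp u 2 m) :
    ‖hu.toLp u‖ ^ 2 = ∫ x, u x ^ 2 ∂m := by
  rw [L2.norm_sq_eq_integral_sq]
  exact integral_congr_ae (hu.coeFn_toLp.mono fun x hx => by simp only [hx])

lemma Integrable.norm_toLp_sqrt_sq {u : X → ℝ} (hu : Integrable u m)
    (hu0 : ∀ᵐ x ∂m, 0 ≤ u x) :
    ‖hu.memLp_two_sqrt.toLp _‖ ^ 2 = ∫ x, u x ∂m := by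
  rw [MemLp.norm_toLp_sq]
  exact integral_congr_ae (hu0.mono fun x hx => Real.sq_sqrt hx)

lemma Integrable.norm_toLp_sqrt_sub_le {u v w : X → ℝ} (hu : Integrable u m)
    (hv : Integrable v m) (hw : Integrable w m) (h : ∀ᵐ x ∂m, |√(u x) - √(v x)| ≤ √(w x)) :
    ‖hu.memLp_two_sqrt.toLp _ - hv.memLp_two_sqrt.toLp _‖ ≤ ‖hw.memLp_two_sqrt.toLp _‖ := by
  refine Lp.norm_le_norm_of_ae_le ?_
  filter_upwards [Lp.coeFn_sub (hu.memLp_two_sqrt.toLp _) (hv.memLp_two_sqrt.toLp _),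
    hu.memLp_two_sqrt.coeFn_toLp, hv.memLp_two_sqrt.coeFn_toLp,
    hw.memLp_two_sqrt.coeFn_toLp, h]
    with x hsub hux hvx hwx hx
  rw [hsub, Pi.sub_apply, hux, hvx, hwx, Real.norm_eq_abs,
    Real.norm_of_nonneg (Real.sqrt_nonneg _)]
  exact hx

lemma L2.eLpNorm_sq_sub_sq_le (F G : Lp ℝ 2 m) :
    eLpNorm (fun x => F x ^ 2 - G x ^ 2) 1 m ≤ ‖F - G‖ₑ * ‖F + G‖ₑ := by
  rw [Lp.enorm_def, Lp.enorm_def]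
  refine le_of_eq_of_le (eLpNorm_congr_ae ?_)
    (eLpNorm_smul_le_mul_eLpNorm (Lp.aestronglyMeasurable (F + G))
      (Lp.aestronglyMeasurable (F - G)))
  filter_upwards [Lp.coeFn_sub F G, Lp.coeFn_add F G] with x hsub hadd
  rw [smul_eq_mul, Pi.mul_apply, hsub, hadd, Pi.sub_apply, Pi.add_apply]
  ring

lemma L2.tendsto_eLpNorm_sq_sub_sq {ι : Type*} {l : Filter ι} {F : ι → Lp ℝ 2 m}
    {G : Lp ℝ 2 m} (hF : Tendsto F l (𝓝 G)) :
    Tendsto (fun i => eLpNorm (fun x => F i x ^ 2 - G x ^ 2) 1 m) l (𝓝 0) := by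
  have hprod : Tendsto (fun i => ‖F i - G‖ * ‖F i + G‖) l (𝓝 0) := by
    simpa using (tendsto_iff_norm_sub_tendsto_zero.1 hF).mul (hF.add_const G).norm
  refine tendsto_of_tendsto_of_tendsto_of_le_of_le tendsto_const_nhds
    (by simpa using ENNReal.tendsto_ofReal hprod) (fun _ => zero_le)
    fun i => L2.eLpNorm_sq_sub_sq_le (F i) G

lemma exists_tendsto_eLpNorm_sub_of_cauchySeq_sqrt {u : ℕ → X → ℝ}
    (hu : ∀ n, Integrable (u n) m) (hu0 : ∀ n, ∀ᵐ x ∂m, 0 ≤ u n x)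
    (hcauchy : CauchySeq fun n => (hu n).memLp_two_sqrt.toLp _) :
    ∃ g : X → ℝ, Integrable g m ∧ Tendsto (fun n => eLpNorm (u n - g) 1 m) atTop (𝓝 0) := by
  obtain ⟨G, hG⟩ := cauchySeq_tendsto_of_complete hcauchy
  refine ⟨fun x => G x ^ 2, (Lp.memLp G).integrable_sq,
    (L2.tendsto_eLpNorm_sq_sub_sq hG).congr fun n => eLpNorm_congr_ae ?_⟩
  filter_upwards [(hu n).memLp_two_sqrt.coeFn_toLp, hu0 n] with x hx hx0
  simp only [hx, Real.sq_sqrt hx0, Pi.sub_apply]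

end MeasureTheory

theorem statement_16_general {X : Type*} [MeasurableSpace X] (m : Measure X)
    {V : Type*} [AddCommGroup V]
    (ℰ : V → V → ℝ)
    (Γ : V → X → ℝ)
    (hΓnonneg : ∀ (f : V) (x : X), 0 ≤ Γ f x)
    (hΓint : ∀ f : V, Integrable (Γ f) m)
    (hΓbound : ∀ f : V, ∫ x, Γ f x ∂m ≤ 2 * ℰ f f)
    (hΓtri : ∀ f g : V, ∀ᵐ x ∂m,
      |Real.sqrt (Γ f x) - Real.sqrt (Γ g x)| ≤ Real.sqrt (Γ (f - g) x)) :
    ∀ f : ℕ → V,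
      (∀ ε : ℝ, 0 < ε → ∃ N, ∀ n ≥ N, ∀ k ≥ N, ℰ (f n - f k) (f n - f k) < ε) →
      (∃ g : X → ℝ, Integrable g m ∧
        Tendsto (fun n => ∫ x, |Γ (f n) x - g x| ∂m) atTop (𝓝 0)) ∧
      (∀ ε : ℝ, 0 < ε → ∃ δ : ℝ, 0 < δ ∧ ∀ A : Set X, MeasurableSet A →
        m A < ENNReal.ofReal δ → ∀ n, ∫ x in A, Γ (f n) x ∂m ≤ ε) := by
  intro f hf
  let H : V → Lp ℝ 2 m := fun v => (hΓint v).memLp_two_sqrt.toLp _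
  have hnorm : ∀ v, ‖H v‖ ^ 2 ≤ 2 * ℰ v v := fun v =>
    ((hΓint v).norm_toLp_sqrt_sq (.of_forall (hΓnonneg v))).trans_le (hΓbound v)
  have hsub : ∀ u v, ‖H u - H v‖ ≤ ‖H (u - v)‖ := fun u v =>
    (hΓint u).norm_toLp_sqrt_sub_le (hΓint v) (hΓint (u - v)) (hΓtri u v)
  have hcauchy : CauchySeq (H ∘ f) := cauchySeq_comp_of_norm_sub_le hsub hnorm fun ε hε =>
    (hf (ε / 2) (half_pos hε)).imp fun N hN n hn k hk => by linarith [hN n hn k hk]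
  obtain ⟨g, hg, hL1⟩ := exists_tendsto_eLpNorm_sub_of_cauchySeq_sqrt (fun n => hΓint (f n))
    (fun n => .of_forall (hΓnonneg (f n))) hcauchy
  refine ⟨⟨g, hg, ?_⟩, fun ε hε => ?_⟩
  · refine ((ENNReal.tendsto_toReal ENNReal.zero_ne_top).comp hL1).congr fun n => ?_
    rw [Function.comp_apply, ← integral_norm_eq_toReal_eLpNorm_one
      ((hΓint (f n)).sub hg).aestronglyMeasurable]
    rfl
  · have hunif : UnifIntegrable (fun n => Γ (f n)) 1 m :=
      unifIntegrable_of_tendsto_Lp le_rfl ENNReal.one_ne_top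
        (fun n => memLp_one_iff_integrable.2 (hΓint (f n)))
        (memLp_one_iff_integrable.2 hg) hL1
    obtain ⟨δ, hδ, hsmall⟩ := hunif.exists_forall_setIntegral_norm_le
      (fun n => (hΓint (f n)).aestronglyMeasurable) hε
    refine ⟨δ, hδ, fun A hA hmA n => ?_⟩
    simpa only [Real.norm_of_nonneg (hΓnonneg _ _)] using hsmall n A hA hmA.le

/-- Theorem (uniform integrability of energy densities): if `ℰ` is a nonnegative
definite symmetric bilinear form on a real vector space `V`, `m` a finite measure, and
`Γ` assigns to each `f ∈ V` an integrable nonnegative density with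
`∫ Γ(f) dm ≤ 2ℰ(f,f)` and the a.e. triangle inequality
`|√Γ(f) − √Γ(g)| ≤ √Γ(f−g)`, then for every `ℰ`-Cauchy sequence `(f_n)` the densities
`Γ(f_n)` converge in `L¹(X,m)` and are uniformly `m`-integrable. -/
theorem statement_16 {X : Type*} [MeasurableSpace X] (m : Measure X)
    [IsFiniteMeasure m]
    {V : Type*} [AddCommGroup V] [Module ℝ V]
    (ℰ : V → V → ℝ)
    (hsym : ∀ f g : V, ℰ f g = ℰ g f)
    (hlin_add : ∀ f g h : V, ℰ (f + g) h = ℰ f h + ℰ g h)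
    (hlin_smul : ∀ (c : ℝ) (f g : V), ℰ (c • f) g = c * ℰ f g)
    (hnonneg : ∀ f : V, 0 ≤ ℰ f f)
    (Γ : V → X → ℝ)
    (hΓnonneg : ∀ (f : V) (x : X), 0 ≤ Γ f x)
    (hΓint : ∀ f : V, Integrable (Γ f) m)
    (hΓbound : ∀ f : V, ∫ x, Γ f x ∂m ≤ 2 * ℰ f f)
    (hΓtri : ∀ f g : V, ∀ᵐ x ∂m,
      |Real.sqrt (Γ f x) - Real.sqrt (Γ g x)| ≤ Real.sqrt (Γ (f - g) x)) :
    ∀ f : ℕ → V,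
      (∀ ε : ℝ, 0 < ε → ∃ N, ∀ n ≥ N, ∀ k ≥ N, ℰ (f n - f k) (f n - f k) < ε) →
      (∃ g : X → ℝ, Integrable g m ∧
        Tendsto (fun n => ∫ x, |Γ (f n) x - g x| ∂m) atTop (𝓝 0)) ∧
      (∀ ε : ℝ, 0 < ε → ∃ δ : ℝ, 0 < δ ∧ ∀ A : Set X, MeasurableSet A →
        m A < ENNReal.ofReal δ → ∀ n, ∫ x in A, Γ (f n) x ∂m ≤ ε) :=
  statement_16_general m ℰ Γ hΓnonneg hΓint hΓbound hΓtri
end
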